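/- Let P_{𝓘₀} = inf over all infinitely divisible real random variables X with E[X²] < ∞ and Var(X) > 0 of P{|X − E[X]| < √(Var(X))}. Then P_{𝓘₀} ≤ e^{−1}. -/

import Mathlib

open MeasureTheory Real

/-- `n`-fold convolution power of a measure on `ℝ`; the `0`-fold convolution is `δ₀`. -/
noncomputable def convPow (ν : Measure ℝ) : ℕ → Measure ℝ
  | 0 => Measure.dirac 0
  | n + 1 => (convPow ν n).conv ν

/-- A probability measure `μ` on `ℝ` is infinitely divisible if for every `n ≥ 1` it is
the `n`-fold convolution of some probability measure `ν`. -/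
def InfinitelyDivisible (μ : Measure ℝ) : Prop :=
  ∀ n : ℕ, 0 < n → ∃ ν : Measure ℝ, IsProbabilityMeasure ν ∧ μ = convPow ν n

/-- The mean of a distribution on `ℝ`. -/
noncomputable def distMean (μ : Measure ℝ) : ℝ := ∫ x, x ∂μ

/-- The variance of a distribution on `ℝ`. -/
noncomputable def distVar (μ : Measure ℝ) : ℝ := ∫ x, (x - distMean μ) ^ 2 ∂μ

/-! The Poisson law of parameter `1` is a witness: `Po(1)` is the `n`-fold convolution power of
`Po(1/n)`, its mean and variance are both `1`, and the only integer at distance less than `1`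
from the mean is `1` itself, which carries mass `e⁻¹`. -/

open ProbabilityTheory
open scoped NNReal Nat

namespace ProbabilityTheory

lemma hasSum_poissonMeasure_mul_natCast (r : ℝ≥0) :
    HasSum (fun n : ℕ ↦ exp (-r) * r ^ n / n ! * n) r := by
  refine (hasSum_nat_add_iff' 1).mp ?_
  have shift : ∀ n : ℕ, exp (-r) * r ^ (n + 1) / (n + 1)! * ((n : ℝ) + 1) =
      r * (exp (-r) * r ^ n / n !) := fun n ↦ by
    rw [Nat.factorial_succ]; push_cast; field_simp; ring
  simpa [shift] using (hasSum_one_poissonMeasure r).mul_left (r : ℝ)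

lemma hasSum_poissonMeasure_mul_natCast_mul_pred (r : ℝ≥0) :
    HasSum (fun n : ℕ ↦ exp (-r) * r ^ n / n ! * (n * (n - 1))) (r ^ 2) := by
  refine (hasSum_nat_add_iff' 2).mp ?_
  have shift : ∀ n : ℕ,
      exp (-r) * r ^ (n + 2) / (n + 2)! * (((n : ℝ) + 2) * ((n : ℝ) + 2 - 1)) =
        r ^ 2 * (exp (-r) * r ^ n / n !) := fun n ↦ by
    rw [Nat.factorial_succ, Nat.factorial_succ]; push_cast; field_simp; ring
  simpa [shift, Finset.sum_range_succ] using (hasSum_one_poissonMeasure r).mul_left ((r : ℝ) ^ 2)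

lemma poissonMeasure_zero : poissonMeasure 0 = Measure.dirac 0 := by
  refine Measure.ext_of_singleton fun n ↦ ?_
  cases n <;> simp [poissonMeasure_singleton]

lemma convPow_map_cast_poissonMeasure (r : ℝ≥0) (n : ℕ) :
    convPow Po(ℝ, r) n = Po(ℝ, n * r) := by
  induction n with
  | zero => simp [convPow, poissonMeasure_zero]
  | succ n ih => rw [convPow, ih, map_cast_poissonMeasure_conv]; push_cast; ring_nf

lemma infinitelyDivisible_map_cast_poissonMeasure (r : ℝ≥0) :
    InfinitelyDivisible Po(ℝ, r) := by
  intro n hn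
  refine ⟨Po(ℝ, r / n), inferInstance, ?_⟩
  rw [convPow_map_cast_poissonMeasure, mul_div_cancel₀ _ (by positivity)]

lemma distMean_map_cast_poissonMeasure (r : ℝ≥0) : distMean Po(ℝ, r) = r := by
  rw [distMean, integral_map .of_discrete (by fun_prop), integral_poissonMeasure]
  exact (hasSum_poissonMeasure_mul_natCast r).tsum_eq

lemma distVar_map_cast_poissonMeasure (r : ℝ≥0) : distVar Po(ℝ, r) = r := by
  rw [distVar, distMean_map_cast_poissonMeasure, integral_map .of_discrete (by fun_prop),
    integral_poissonMeasure]
  have h := ((hasSum_poissonMeasure_mul_natCast_mul_pred r).add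
    ((hasSum_poissonMeasure_mul_natCast r).mul_left (1 - 2 * (r : ℝ)))).add
    ((hasSum_one_poissonMeasure r).mul_left ((r : ℝ) ^ 2))
  convert h.tsum_eq using 1
  · exact tsum_congr fun n ↦ by rw [smul_eq_mul]; ring
  · ring

lemma integrable_sq_map_cast_poissonMeasure (r : ℝ≥0) :
    Integrable (fun x : ℝ ↦ x ^ 2) Po(ℝ, r) := by
  rw [integrable_map_measure (by fun_prop) .of_discrete, integrable_poissonMeasure_iff]
  refine ((hasSum_poissonMeasure_mul_natCast_mul_pred r).add
    (hasSum_poissonMeasure_mul_natCast r)).summable.congr fun n ↦ ?_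
  simp only [Function.comp_apply, norm_pow, Real.norm_natCast]
  ring

lemma map_cast_poissonMeasure_abs_sub_one_lt_one (r : ℝ≥0) :
    Po(ℝ, r) {x : ℝ | |x - 1| < 1} = Po(r) {1} := by
  rw [MeasurableEmbedding.natCast.map_apply]
  congr 1
  ext n
  simp only [Set.mem_preimage, Set.mem_ofPred_eq, abs_sub_lt_iff, Set.mem_singleton_iff]
  constructor
  · rintro ⟨h₁, h₂⟩
    have : 0 < n := by exact_mod_cast (by linarith : (0 : ℝ) < n)
    have : n < 2 := by exact_mod_cast (by linarith : (n : ℝ) < 2)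
    omega
  · rintro rfl
    norm_num

end ProbabilityTheory

theorem PI0_le_exp_neg_one :
    sInf {r : ℝ | ∃ μ : Measure ℝ, IsProbabilityMeasure μ ∧ InfinitelyDivisible μ ∧
      Integrable (fun x => x ^ 2) μ ∧ 0 < distVar μ ∧
      r = (μ {x : ℝ | |x - distMean μ| < Real.sqrt (distVar μ)}).toReal} ≤
      Real.exp (-1) := by
  refine csInf_le ⟨0, ?_⟩ ⟨Po(ℝ, 1), inferInstance, infinitelyDivisible_map_cast_poissonMeasure 1,
    integrable_sq_map_cast_poissonMeasure 1, ?_, ?_⟩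
  · rintro r ⟨μ, -, -, -, -, rfl⟩
    exact ENNReal.toReal_nonneg
  · simp [distVar_map_cast_poissonMeasure]
  · rw [distMean_map_cast_poissonMeasure, distVar_map_cast_poissonMeasure, NNReal.coe_one,
      Real.sqrt_one, map_cast_poissonMeasure_abs_sub_one_lt_one, poissonMeasure_singleton,
      ENNReal.toReal_ofReal (by positivity)]
    simp
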